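/- Sliding ball lemma: let F ⊆ ℝⁿ, let p, q ∈ ℝⁿ with B_δ(p) ⊆ F_ext for some δ > 0 and q ∈ closure(F), and let c : [0,1] → ℝⁿ be a continuous curve with c(0) = p and c(1) = q. Then there exists t₀ ∈ [0,1) such that B_δ(c(t₀)) ⊆ F_ext and ∂B_δ(c(t₀)) ∩ ∂F ≠ ∅. -/
import Mathlib


open MeasureTheory Filter Metric Topology

/-- The measure-theoretic exterior of `F`: points near which `F` has measure zero. -/
def mExterior (n : ℕ) (F : Set (EuclideanSpace ℝ (Fin n))) : Set (EuclideanSpace ℝ (Fin n)) :=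
  {x | ∃ r > (0 : ℝ), volume (F ∩ ball x r) = 0}

/-- The measure-theoretic interior of `F`: points near which `F` has full measure. -/
def mInterior (n : ℕ) (F : Set (EuclideanSpace ℝ (Fin n))) : Set (EuclideanSpace ℝ (Fin n)) :=
  {x | ∃ r > (0 : ℝ), volume (ball x r \ F) = 0}

lemma mExterior_isOpen (n : ℕ) (F : Set (EuclideanSpace ℝ (Fin n))) :
    IsOpen (mExterior n F) := by
  rw [Metric.isOpen_iff]
  rintro x ⟨r, hr, hvol⟩
  refine ⟨r / 2, by positivity, fun y hy => ⟨r / 2, by positivity,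
    measure_mono_null (Set.inter_subset_inter_right _ (fun z hz => ?_)) hvol⟩⟩
  rw [mem_ball] at *
  calc dist z x ≤ dist z y + dist y x := dist_triangle _ _ _
    _ < r / 2 + r / 2 := by linarith
    _ = r := by ring

/-- Sliding ball lemma: if `B_δ(p) ⊆ F_ext`, `q ∈ closure F`, and `c` is a continuous curve
from `p` to `q`, then there is `t₀ ∈ [0,1)` such that `B_δ(c(t₀))` is an exterior tangent
ball to `F`: it is contained in `F_ext` and its boundary sphere touches `∂F`. -/
theorem sliding_ball (n : ℕ) (F : Set (EuclideanSpace ℝ (Fin n)))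
    (hInt : mInterior n F ⊆ F) (hExt : F ∩ mExterior n F = ∅)
    (δ : ℝ) (hδ : 0 < δ) (p q : EuclideanSpace ℝ (Fin n))
    (hp : ball p δ ⊆ mExterior n F) (hq : q ∈ closure F)
    (c : ℝ → EuclideanSpace ℝ (Fin n)) (hc : ContinuousOn c (Set.Icc 0 1))
    (hc0 : c 0 = p) (hc1 : c 1 = q) :
    ∃ t₀ ∈ Set.Ico (0 : ℝ) 1,
      ball (c t₀) δ ⊆ mExterior n F ∧ (sphere (c t₀) δ ∩ frontier F).Nonempty := by
  set E := mExterior n F with hE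
  have hExtOpen : IsOpen E := mExterior_isOpen n F
  have hEFc : E ⊆ Fᶜ := fun x hx hxF =>
    Set.eq_empty_iff_forall_notMem.mp hExt x ⟨hxF, hx⟩
  -- the set of centers whose δ-ball is in E is closed
  set A : Set (EuclideanSpace ℝ (Fin n)) := {x | ball x δ ⊆ E} with hAdef
  have hA_closed : IsClosed A := by
    refine isClosed_of_closure_subset ?_
    intro x hx y hy
    rw [mem_ball] at hy
    rw [Metric.mem_closure_iff] at hx
    obtain ⟨a, haA, hax⟩ := hx (δ - dist y x) (by linarith)
    refine haA ?_
    rw [mem_ball]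
    calc dist y a ≤ dist y x + dist x a := dist_triangle _ _ _
      _ < dist y x + (δ - dist y x) := by linarith
      _ = δ := by ring
  set T : Set ℝ := Set.Icc (0 : ℝ) 1 ∩ c ⁻¹' A with hTdef
  have hT_closed : IsClosed T := hc.preimage_isClosed_of_isClosed isClosed_Icc hA_closed
  have h0T : (0 : ℝ) ∈ T := ⟨⟨le_refl 0, zero_le_one⟩, by
    show ball (c 0) δ ⊆ E; rw [hc0]; exact hp⟩
  have hBdd : BddAbove T := ⟨1, fun t ht => ht.1.2⟩
  have h1T : (1 : ℝ) ∉ T := by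
    rintro ⟨-, h1⟩
    have h1' : ball q δ ⊆ E := by rw [← hc1]; exact h1
    obtain ⟨y, hyF, hyq⟩ := Metric.mem_closure_iff.mp hq δ hδ
    exact hEFc (h1' (by rw [mem_ball, dist_comm]; exact hyq)) hyF
  set t₀ : ℝ := sSup T with ht₀def
  have ht₀T : t₀ ∈ T := hT_closed.csSup_mem ⟨0, h0T⟩ hBdd
  have ht₀1 : t₀ < 1 := lt_of_le_of_ne ht₀T.1.2 (fun h => h1T (h ▸ ht₀T))
  have hball : ball (c t₀) δ ⊆ E := ht₀T.2
  refine ⟨t₀, ⟨ht₀T.1.1, ht₀1⟩, hball, ?_⟩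
  by_contra hcon
  rw [Set.not_nonempty_iff_eq_empty] at hcon
  -- then the whole sphere lies in E
  have hsph : sphere (c t₀) δ ⊆ E := by
    intro x hx
    by_contra hxE
    have hxF : x ∈ closure F := by
      by_contra hxcl
      rw [Metric.mem_closure_iff] at hxcl
      push_neg at hxcl
      obtain ⟨r, hr, hrF⟩ := hxcl
      refine hxE ⟨r, hr, ?_⟩
      have : F ∩ ball x r = ∅ := by
        ext z
        simp only [Set.mem_inter_iff, mem_ball, Set.mem_empty_iff_false, iff_false, not_and]
        intro hz
        rw [dist_comm]
        exact not_lt.mpr (hrF z hz)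
      rw [this]; simp
    have hxFc : x ∈ closure Fᶜ := by
      have h1 : x ∈ closure (ball (c t₀) δ) := by
        rw [closure_ball _ hδ.ne']
        exact sphere_subset_closedBall hx
      exact closure_mono (hball.trans hEFc) h1
    have hxfr : x ∈ frontier F := by
      rw [frontier_eq_closure_inter_closure]
      exact ⟨hxF, hxFc⟩
    exact Set.eq_empty_iff_forall_notMem.mp hcon x ⟨hx, hxfr⟩
  have hcb : closedBall (c t₀) δ ⊆ E := by
    rw [← ball_union_sphere]
    exact Set.union_subset hball hsph
  obtain ⟨ε, hε, hthick⟩ :=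
    (isCompact_closedBall (c t₀) δ).exists_cthickening_subset_open hExtOpen hcb
  have hbig : closedBall (c t₀) (δ + ε) ⊆ E := by
    have := cthickening_closedBall hε.le hδ.le (c t₀)
    rw [add_comm δ ε]
    rw [← this]
    exact hthick
  have hIocIcc : Set.Ioc t₀ 1 ⊆ Set.Icc 0 1 :=
    fun t ht => ⟨le_trans ht₀T.1.1 ht.1.le, ht.2⟩
  have hcw : ContinuousWithinAt c (Set.Ioc t₀ 1) t₀ :=
    (hc t₀ ht₀T.1).mono hIocIcc
  have hNB : (𝓝[Set.Ioc t₀ 1] t₀).NeBot := by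
    rw [nhdsWithin_Ioc_eq_nhdsGT ht₀1]
    exact nhdsGT_neBot t₀
  obtain ⟨t, htball, htIoc⟩ :=
    ((hcw.eventually_mem (ball_mem_nhds (c t₀) hε)).and eventually_mem_nhdsWithin).exists
  have htT : t ∈ T := by
    refine ⟨⟨le_trans ht₀T.1.1 htIoc.1.le, htIoc.2⟩, ?_⟩
    show ball (c t) δ ⊆ E
    refine fun z hz => hbig ?_
    rw [mem_ball] at hz htball
    rw [mem_closedBall]
    calc dist z (c t₀) ≤ dist z (c t) + dist (c t) (c t₀) := dist_triangle _ _ _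
      _ ≤ δ + ε := by linarith
  exact absurd (le_csSup hBdd htT) (not_le.mpr htIoc.1)
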